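/- arXiv:1905.02338 — 6 statements merged into one kernel-verified Lean document; each statement's English description precedes it below -/
import Mathlib

section
/- For all real x > 0 and all s in [0,1], one has x^{1-s} ≤ Γ(x+1)/Γ(x+s) ≤ (x+s)^{1-s}. -/
open Real

lemma gamma_log_convex_ineq (a b t : ℝ) (ha : 0 < a) (hb : 0 < b)
    (ht0 : 0 ≤ t) (ht1 : t ≤ 1) :
    Real.Gamma ((1 - t) * a + t * b) ≤ Real.Gamma a ^ (1 - t) * Real.Gamma b ^ t := by
  have h := Real.convexOn_log_Gamma.2 (Set.mem_Ioi.2 ha) (Set.mem_Ioi.2 hb)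
    (show (0:ℝ) ≤ 1 - t by linarith) ht0 (by ring)
  simp only [Function.comp_apply, smul_eq_mul] at h
  have hm2 : (0:ℝ) < (1 - t) * a + t * b := by
    rcases eq_or_lt_of_le ht1 with rfl | h1
    · simpa using hb
    · nlinarith
  have hga := Real.Gamma_pos_of_pos ha
  have hgb := Real.Gamma_pos_of_pos hb
  have key : Real.log (Real.Gamma ((1 - t) * a + t * b))
      ≤ Real.log (Real.Gamma a ^ (1 - t) * Real.Gamma b ^ t) := by
    rw [Real.log_mul (by positivity) (by positivity), Real.log_rpow hga, Real.log_rpow hgb]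
    linarith
  have := Real.exp_le_exp.2 key
  rwa [Real.exp_log (Real.Gamma_pos_of_pos hm2), Real.exp_log (by positivity)] at this

/-- For all real `x > 0` and all `s ∈ [0,1]`,
`x^(1-s) ≤ Γ(x+1)/Γ(x+s) ≤ (x+s)^(1-s)`. -/
theorem gamma_ratio_bounds (x s : ℝ) (hx : 0 < x) (hs : s ∈ Set.Icc (0 : ℝ) 1) :
    x ^ (1 - s) ≤ Real.Gamma (x + 1) / Real.Gamma (x + s) ∧
      Real.Gamma (x + 1) / Real.Gamma (x + s) ≤ (x + s) ^ (1 - s) := by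
  obtain ⟨hs0, hs1⟩ := hs
  have hxs : 0 < x + s := by linarith
  have hgxs : 0 < Real.Gamma (x + s) := Real.Gamma_pos_of_pos hxs
  have hgx : 0 < Real.Gamma x := Real.Gamma_pos_of_pos hx
  have hgx1 : 0 < Real.Gamma (x + 1) := Real.Gamma_pos_of_pos (by linarith)
  constructor
  · -- lower: Γ(x+s) ≤ Γ(x)^(1-s) Γ(x+1)^s
    have h := gamma_log_convex_ineq x (x + 1) s hx (by linarith) hs0 hs1
    have he : (1 - s) * x + s * (x + 1) = x + s := by ring
    rw [he] at h
    rw [le_div_iff₀ hgxs]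
    calc x ^ (1 - s) * Real.Gamma (x + s)
        ≤ x ^ (1 - s) * (Real.Gamma x ^ (1 - s) * Real.Gamma (x + 1) ^ s) := by
          apply mul_le_mul_of_nonneg_left h (by positivity)
      _ = (x * Real.Gamma x) ^ (1 - s) * Real.Gamma (x + 1) ^ s := by
          rw [Real.mul_rpow hx.le hgx.le]; ring
      _ = Real.Gamma (x + 1) := by
          rw [← Real.Gamma_add_one hx.ne', ← Real.rpow_add hgx1]
          simp
  · -- upper: Γ(x+1) ≤ Γ(x+s)^s Γ(x+s+1)^(1-s)
    have h := gamma_log_convex_ineq (x + s + 1) (x + s) s (by linarith) hxs hs0 hs1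
    have he : (1 - s) * (x + s + 1) + s * (x + s) = x + 1 := by ring
    rw [he] at h
    rw [div_le_iff₀ hgxs]
    calc Real.Gamma (x + 1)
        ≤ Real.Gamma (x + s + 1) ^ (1 - s) * Real.Gamma (x + s) ^ s := h
      _ = ((x + s) * Real.Gamma (x + s)) ^ (1 - s) * Real.Gamma (x + s) ^ s := by
          rw [Real.Gamma_add_one hxs.ne']
      _ = (x + s) ^ (1 - s) * Real.Gamma (x + s) := by
          rw [Real.mul_rpow hxs.le hgxs.le, mul_assoc, ← Real.rpow_add hgxs]
          simp
end

section
/- For every θ ∈ (0,1) and every x > 0, one has x^θ · (1 + θ/x)^{θ-1} ≤ Γ(x+θ)/Γ(x) ≤ x^θ · (1 + 1/x)^θ. -/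
/-! Both bounds come from Wendel's inequality `Γ(x + s) ≤ x ^ s Γ(x)` for `x > 0`, `s ∈ (0,1)`,
which is log-convexity of `Γ` on the segment `[x, x + 1]` combined with `Γ(x + 1) = x Γ(x)`.
Applied at `x` with `s = θ` it gives the upper bound; applied at `x + θ` with `s = 1 - θ` it gives
`x Γ(x) = Γ(x + 1) ≤ (x + θ) ^ (1 - θ) Γ(x + θ)`, which is the lower bound. -/

open Real

theorem Real.Gamma_add_le_rpow_mul_Gamma {x s : ℝ} (hx : 0 < x) (hs0 : 0 < s) (hs1 : s < 1) :
    Gamma (x + s) ≤ x ^ s * Gamma x := by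
  have hG : 0 < Gamma x := Gamma_pos_of_pos hx
  have hconv := Gamma_mul_add_mul_le_rpow_Gamma_mul_rpow_Gamma hx (by linarith : 0 < x + 1)
    (sub_pos.2 hs1) hs0 (by ring)
  calc Gamma (x + s) = Gamma ((1 - s) * x + s * (x + 1)) := by ring_nf
    _ ≤ Gamma x ^ (1 - s) * Gamma (x + 1) ^ s := hconv
    _ = x ^ s * (Gamma x ^ (1 - s) * Gamma x ^ s) := by
      rw [Gamma_add_one hx.ne', mul_rpow hx.le hG.le]; ring
    _ = x ^ s * Gamma x := by rw [← rpow_add hG, sub_add_cancel, rpow_one]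

theorem Real.rpow_mul_one_add_div_rpow_sub_one {x a : ℝ} (hx : 0 < x) (hxa : 0 ≤ x + a) (t : ℝ) :
    x ^ t * (1 + a / x) ^ (t - 1) = x * (x + a) ^ (t - 1) := by
  rw [show 1 + a / x = (x + a) * x⁻¹ by field_simp, mul_rpow hxa (inv_nonneg.2 hx.le),
    inv_rpow hx.le, ← mul_assoc, mul_comm (x ^ t), mul_assoc, ← div_eq_mul_inv,
    ← rpow_sub hx, sub_sub_cancel, rpow_one, mul_comm]

/-- For every `θ ∈ (0,1)` and every `x > 0`,
`x^θ (1 + θ/x)^(θ-1) ≤ Γ(x+θ)/Γ(x) ≤ x^θ (1 + 1/x)^θ`. -/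
theorem gamma_ratio_bounds_theta_lt_one (θ x : ℝ) (hθ : θ ∈ Set.Ioo (0 : ℝ) 1) (hx : 0 < x) :
    x ^ θ * (1 + θ / x) ^ (θ - 1) ≤ Real.Gamma (x + θ) / Real.Gamma x ∧
      Real.Gamma (x + θ) / Real.Gamma x ≤ x ^ θ * (1 + 1 / x) ^ θ := by
  obtain ⟨hθ0, hθ1⟩ := hθ
  have hxθ : 0 < x + θ := by linarith
  have hG : 0 < Gamma x := Gamma_pos_of_pos hx
  constructor
  · have hwendel := Gamma_add_le_rpow_mul_Gamma hxθ (sub_pos.2 hθ1) (by linarith : 1 - θ < 1)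
    rw [add_add_sub_cancel, Gamma_add_one hx.ne'] at hwendel
    rw [rpow_mul_one_add_div_rpow_sub_one hx hxθ.le, le_div_iff₀ hG, ← neg_sub 1 θ,
      rpow_neg hxθ.le, mul_right_comm, ← div_eq_mul_inv, div_le_iff₀ (rpow_pos_of_pos hxθ _)]
    linarith
  · calc Gamma (x + θ) / Gamma x ≤ x ^ θ :=
          div_le_of_le_mul₀ hG.le (rpow_nonneg hx.le _) (Gamma_add_le_rpow_mul_Gamma hx hθ0 hθ1)
      _ ≤ x ^ θ * (1 + 1 / x) ^ θ :=
          le_mul_of_one_le_right (rpow_nonneg hx.le _)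
            (one_le_rpow (le_add_of_nonneg_right (by positivity)) hθ0.le)
end

section
/- For every θ > 0 there is a constant C = max(θ, θ²) such that for all x > 0, Γ(x+θ)/Γ(x) = x^θ · exp(E(x)) with |E(x)| ≤ C/x. In particular, Γ(x+θ)/Γ(x) is asymptotic to x^θ as x → ∞. -/
/-!
`log ∘ Γ` is convex on `(0, ∞)` and its unit increments are `log Γ (y + 1) - log Γ y = log y`.
Comparing the secant slope `(log Γ (x + θ) - log Γ x) / θ` with the unit slopes `log x` at `x`
and `log (x + θ)` at `x + θ` traps `E = log Γ (x + θ) - log Γ x - θ log x` between `0` and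
`θ log (1 + θ / x)` when `θ ≥ 1`, and between `-(1 - θ) log (1 + θ / x)` and `0` when `θ ≤ 1`.
Since `log (1 + t) ≤ t`, this gives `|E| ≤ max θ θ² / x`.
-/

open Real Filter Set

lemma log_Gamma_add_one {y : ℝ} (hy : 0 < y) :
    log (Gamma (y + 1)) = log (Gamma y) + log y := by
  rw [Gamma_add_one hy.ne', log_mul hy.ne' (Gamma_pos_of_pos hy).ne', add_comm]

lemma log_Gamma_secant_mono {x θ₁ θ₂ : ℝ} (hx : 0 < x) (hθ₁ : 0 < θ₁) (hθ₁₂ : θ₁ ≤ θ₂) :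
    (log (Gamma (x + θ₁)) - log (Gamma x)) / θ₁ ≤ (log (Gamma (x + θ₂)) - log (Gamma x)) / θ₂ := by
  have := convexOn_log_Gamma.secant_mono (a := x) (x := x + θ₁) (y := x + θ₂) hx
    (by simp only [mem_Ioi]; linarith) (by simp only [mem_Ioi]; linarith) (by linarith)
    (by linarith) (by linarith)
  simpa only [Function.comp_apply, add_sub_cancel_left] using this

lemma log_Gamma_add_le_of_le_one {x θ : ℝ} (hx : 0 < x) (hθ : 0 < θ) (hθ1 : θ ≤ 1) :
    log (Gamma (x + θ)) ≤ log (Gamma x) + θ * log x := by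
  have := log_Gamma_secant_mono hx hθ hθ1
  rw [log_Gamma_add_one hx, div_le_iff₀ hθ] at this
  linarith

lemma log_Gamma_add_ge_of_one_le {x θ : ℝ} (hx : 0 < x) (hθ : 1 ≤ θ) :
    log (Gamma x) + θ * log x ≤ log (Gamma (x + θ)) := by
  have := log_Gamma_secant_mono hx one_pos hθ
  rw [log_Gamma_add_one hx, le_div_iff₀ (by linarith)] at this
  linarith

lemma log_Gamma_add_le {x θ : ℝ} (hx : 0 < x) (hθ : 0 < θ) :
    log (Gamma (x + θ)) ≤ log (Gamma x) + θ * log (x + θ) := by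
  have := convexOn_log_Gamma.slope_mono_adjacent (x := x) (y := x + θ) (z := x + θ + 1) hx
    (by simp only [mem_Ioi]; linarith) (by linarith) (by linarith)
  simp only [Function.comp_apply, add_sub_cancel_left, add_sub_cancel_left, div_one] at this
  rw [log_Gamma_add_one (by linarith), div_le_iff₀ hθ] at this
  linarith

lemma log_Gamma_add_ge_of_le_one {x θ : ℝ} (hx : 0 < x) (hθ : 0 < θ) (hθ1 : θ ≤ 1) :
    log (Gamma x) + log x - (1 - θ) * log (x + θ) ≤ log (Gamma (x + θ)) := by
  have := convexOn_log_Gamma.2 (mem_Ioi.2 (by linarith : 0 < x + θ))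
    (mem_Ioi.2 (by linarith : 0 < x + θ + 1)) hθ.le (by linarith : 0 ≤ 1 - θ) (by ring)
  simp only [Function.comp_apply, smul_eq_mul,
    show θ * (x + θ) + (1 - θ) * (x + θ + 1) = x + 1 by ring] at this
  rw [log_Gamma_add_one hx, log_Gamma_add_one (by linarith)] at this
  linarith

noncomputable def gammaRatioError (θ x : ℝ) : ℝ :=
  log (Gamma (x + θ)) - log (Gamma x) - θ * log x

lemma Gamma_add_div_Gamma_eq_rpow_mul_exp {x θ : ℝ} (hx : 0 < x) (hxθ : 0 < x + θ) :
    Gamma (x + θ) / Gamma x = x ^ θ * exp (gammaRatioError θ x) := by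
  rw [rpow_def_of_pos hx, ← exp_add,
    show log x * θ + gammaRatioError θ x = log (Gamma (x + θ)) - log (Gamma x) by
      unfold gammaRatioError; ring,
    exp_sub, exp_log (Gamma_pos_of_pos hxθ), exp_log (Gamma_pos_of_pos hx)]

lemma log_add_sub_log_le_div {x θ : ℝ} (hx : 0 < x) (hθ : 0 ≤ θ) :
    log (x + θ) - log x ≤ θ / x := by
  rw [← log_div (by linarith) hx.ne']
  calc log ((x + θ) / x) ≤ (x + θ) / x - 1 := log_le_sub_one_of_pos (by positivity)
    _ = θ / x := by field_simp; ring

lemma abs_gammaRatioError_le {x θ : ℝ} (hx : 0 < x) (hθ : 0 < θ) :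
    |gammaRatioError θ x| ≤ max θ (θ ^ 2) / x := by
  have hlog := log_add_sub_log_le_div hx hθ.le
  have hmono : log x ≤ log (x + θ) := log_le_log hx (by linarith)
  unfold gammaRatioError
  rcases le_total θ 1 with hθ1 | hθ1
  · have hlower := log_Gamma_add_ge_of_le_one hx hθ hθ1
    have hupper := log_Gamma_add_le_of_le_one hx hθ hθ1
    calc _ ≤ θ / x := by
          refine abs_le.2 ⟨?_, by linarith [div_pos hθ hx]⟩
          nlinarith [mul_le_mul_of_nonneg_left hlog (sub_nonneg.2 hθ1), div_pos hθ hx]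
      _ ≤ max θ (θ ^ 2) / x := by gcongr; exact le_max_left _ _
  · have hlower := log_Gamma_add_ge_of_one_le hx hθ1
    have hupper := log_Gamma_add_le hx hθ
    calc _ ≤ θ ^ 2 / x := by
          refine abs_le.2 ⟨by linarith [div_pos (pow_pos hθ 2) hx], ?_⟩
          have := mul_le_mul_of_nonneg_left hlog hθ.le
          rw [mul_div_assoc', ← sq] at this
          linarith
      _ ≤ max θ (θ ^ 2) / x := by gcongr; exact le_max_right _ _

lemma tendsto_gammaRatioError_atTop {θ : ℝ} (hθ : 0 < θ) :
    Tendsto (gammaRatioError θ) atTop (nhds 0) := by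
  refine squeeze_zero_norm' (a := fun x => max θ (θ ^ 2) / x) ?_
    (tendsto_const_nhds.div_atTop tendsto_id)
  filter_upwards [eventually_gt_atTop 0] with x hx
  exact abs_gammaRatioError_le hx hθ

/-- For every `θ > 0` there is a constant `C = max(θ, θ²)` such that for all `x > 0`,
`Γ(x+θ)/Γ(x) = x^θ · exp(E(x))` with `|E(x)| ≤ C/x`.  In particular `Γ(x+θ)/Γ(x)` is
asymptotic to `x^θ` as `x → ∞`. -/
theorem gamma_ratio_asymptotic (θ : ℝ) (hθ : 0 < θ) :
    ∃ E : ℝ → ℝ,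
      (∀ x, 0 < x →
        Real.Gamma (x + θ) / Real.Gamma x = x ^ θ * Real.exp (E x) ∧
          |E x| ≤ max θ (θ ^ 2) / x) ∧
      Filter.Tendsto (fun x => Real.Gamma (x + θ) / Real.Gamma x / x ^ θ)
        Filter.atTop (nhds 1) := by
  refine ⟨gammaRatioError θ, fun x hx =>
    ⟨Gamma_add_div_Gamma_eq_rpow_mul_exp hx (by linarith), abs_gammaRatioError_le hx hθ⟩, ?_⟩
  have hexp := (continuous_exp.tendsto 0).comp (tendsto_gammaRatioError_atTop hθ)
  rw [exp_zero] at hexp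
  refine hexp.congr' ?_
  filter_upwards [eventually_gt_atTop 0] with x hx
  rw [Gamma_add_div_Gamma_eq_rpow_mul_exp hx (by linarith),
    mul_div_cancel_left₀ _ (rpow_pos_of_pos hx θ).ne', Function.comp_apply]
end

section
/- Let N ≥ 2 and let real numbers a_1 > b_1 > a_2 > b_2 > ⋯ > b_{N-1} > a_N interlace. Let K be a compact subset of ℂ \ [a_N, a_1] at distance d > 0 from [a_N, a_1] and contained in the disk of radius R_0. Then for every z ∈ K, |∑_{i=1}^N 1/(z - a_i) − ∑_{i=1}^{N-1} 1/(z - b_i)| ≤ 10(d + R_0)/d². -/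
/-!
Write `x = Re z`. Each paired difference `(z - a)⁻¹ - (z - b)⁻¹` has norm
`(a - b) / (‖z - a‖ ‖z - b‖)`, and `2 ‖z - t‖ ≥ d + |t - x|` for every point `t` of `[a_N, a_1]`.
For the bounded increasing function `softSign d s = s / (d + |s|)` this makes the `i`-th
difference at most `4 / d` times the increment of `softSign d` over `[b_i - x, a_i - x]`.
Interlacing makes these intervals disjoint, so the increments sum to at most `2`; the
unpaired point `a_N` adds at most `1 / d`, for a total of `9 / d`.
-/

open Finset

noncomputable def softSign (d s : ℝ) : ℝ := s / (d + |s|)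

theorem abs_softSign_le {d : ℝ} (hd : 0 ≤ d) (s : ℝ) : |softSign d s| ≤ 1 := by
  rw [softSign, abs_div, abs_of_nonneg (by positivity : 0 ≤ d + |s|)]
  exact div_le_one_of_le₀ (by linarith) (by positivity)

theorem mul_sub_div_le_softSign_sub {d p q : ℝ} (hd : 0 < d) (hpq : p ≤ q) :
    d * (q - p) / ((d + |p|) * (d + |q|)) ≤ softSign d q - softSign d p := by
  have hp : 0 < d + |p| := by positivity
  have hq : 0 < d + |q| := by positivity
  have hcross : 0 ≤ q * |p| - p * |q| := by
    rcases abs_cases p with hp' | hp' <;> rcases abs_cases q with hq' | hq' <;> nlinarith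
  -- the numerator of the difference is `d * (q - p) + (q * |p| - p * |q|)`
  rw [softSign, softSign, div_sub_div _ _ hq.ne' hp.ne', mul_comm (d + |p|)]
  gcongr
  nlinarith

theorem softSign_monotone {d : ℝ} (hd : 0 < d) : Monotone (softSign d) := fun p q hpq =>
  sub_nonneg.mp <| (mul_sub_div_le_softSign_sub hd hpq).trans' <| by
    have := sub_nonneg.mpr hpq
    positivity

theorem sum_Icc_sub_le_of_interlace {α β : Type*} [Preorder α] [AddCommGroup β] [PartialOrder β]
    [IsOrderedAddMonoid β] {f : α → β} (hf : Monotone f) {a b : ℕ → α} {n : ℕ}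
    (h : ∀ i ∈ Icc 1 n, a (i + 1) ≤ b i) :
    ∑ i ∈ Icc 1 n, (f (a i) - f (b i)) ≤ f (a 1) - f (a (n + 1)) := by
  induction n with
  | zero => simp
  | succ n ih =>
    have hsum := ih fun i hi => h i (by simp only [mem_Icc] at hi ⊢; omega)
    have hlast := hf (h (n + 1) (by simp))
    calc ∑ i ∈ Icc 1 (n + 1), (f (a i) - f (b i))
        = ∑ i ∈ Icc 1 n, (f (a i) - f (b i)) + (f (a (n + 1)) - f (b (n + 1))) :=
          sum_Icc_succ_top (by omega) _
      _ ≤ f (a 1) - f (a (n + 1)) + (f (a (n + 1)) - f (b (n + 1))) := by gcongr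
      _ = f (a 1) - f (b (n + 1)) := by abel
      _ ≤ f (a 1) - f (a (n + 1 + 1)) := by gcongr

theorem antitoneOn_of_interlace {α : Type*} [Preorder α] {a b : ℕ → α} {n : ℕ}
    (h : ∀ i ∈ Icc 1 n, a (i + 1) ≤ b i ∧ b i ≤ a i) : AntitoneOn a (Set.Icc 1 (n + 1)) := by
  intro i hi j hj hij
  induction j, hij using Nat.le_induction with
  | base => rfl
  | succ j hij ih =>
    have hj' : j ∈ Set.Icc 1 (n + 1) := ⟨hi.1.trans hij, by have := hj.2; omega⟩
    obtain ⟨h₁, h₂⟩ := h j (mem_Icc.mpr ⟨hj'.1, by have := hj.2; omega⟩)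
    exact (h₁.trans h₂).trans (ih hj')

theorem norm_inv_sub_inv_ofReal (z : ℂ) {p q : ℝ} (hp : (z - p) ≠ 0) (hq : z - q ≠ 0) :
    ‖(z - q)⁻¹ - (z - p)⁻¹‖ = |q - p| / (‖z - q‖ * ‖z - p‖) := by
  rw [← dist_eq_norm, dist_inv_inv₀ hq hp, dist_sub_left, Complex.dist_eq, ← Complex.ofReal_sub,
    Complex.norm_real, Real.norm_eq_abs]

theorem add_abs_sub_re_le_two_mul_norm {z : ℂ} {d t : ℝ} (h : d ≤ ‖z - t‖) :
    d + |t - z.re| ≤ 2 * ‖z - t‖ := by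
  have := Complex.abs_re_le_norm (z - t)
  rw [Complex.sub_re, Complex.ofReal_re, abs_sub_comm] at this
  linarith

theorem norm_inv_sub_inv_le_softSign_sub {z : ℂ} {d p q : ℝ} (hd : 0 < d) (hpq : p ≤ q)
    (hp : d ≤ ‖z - p‖) (hq : d ≤ ‖z - q‖) :
    ‖(z - q)⁻¹ - (z - p)⁻¹‖ ≤ 4 / d * (softSign d (q - z.re) - softSign d (p - z.re)) := by
  have hp₀ : 0 < ‖z - p‖ := hd.trans_le hp
  have hq₀ : 0 < ‖z - q‖ := hd.trans_le hq
  have hden : (d + |p - z.re|) * (d + |q - z.re|) ≤ 4 * (‖z - q‖ * ‖z - p‖) := by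
    nlinarith [add_abs_sub_re_le_two_mul_norm hp, add_abs_sub_re_le_two_mul_norm hq,
      abs_nonneg (p - z.re), abs_nonneg (q - z.re)]
  rw [norm_inv_sub_inv_ofReal z (norm_pos_iff.mp hp₀) (norm_pos_iff.mp hq₀),
    abs_of_nonneg (sub_nonneg.mpr hpq)]
  calc (q - p) / (‖z - q‖ * ‖z - p‖)
      ≤ 4 * (q - p) / ((d + |p - z.re|) * (d + |q - z.re|)) := by
        rw [div_le_div_iff₀ (by positivity) (by positivity)]
        nlinarith [sub_nonneg.mpr hpq]
    _ = 4 / d * (d * ((q - z.re) - (p - z.re)) / ((d + |p - z.re|) * (d + |q - z.re|))) := by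
        field_simp; ring
    _ ≤ 4 / d * (softSign d (q - z.re) - softSign d (p - z.re)) := by
        gcongr
        exact mul_sub_div_le_softSign_sub hd (by linarith)

theorem sum_norm_inv_sub_inv_le_of_interlace {z : ℂ} {d : ℝ} (hd : 0 < d) {a b : ℕ → ℝ} {n : ℕ}
    (hab : ∀ i ∈ Icc 1 n, a (i + 1) ≤ b i ∧ b i ≤ a i)
    (ha : ∀ i ∈ Icc 1 n, d ≤ ‖z - a i‖) (hb : ∀ i ∈ Icc 1 n, d ≤ ‖z - b i‖) :
    ∑ i ∈ Icc 1 n, ‖(z - a i)⁻¹ - (z - b i)⁻¹‖ ≤ 8 / d := by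
  set H : ℝ → ℝ := fun t => softSign d (t - z.re)
  have hH : Monotone H := fun s t hst => softSign_monotone hd (by linarith)
  have hH₁ := abs_le.mp (abs_softSign_le hd.le (a 1 - z.re))
  have hH₂ := abs_le.mp (abs_softSign_le hd.le (a (n + 1) - z.re))
  calc ∑ i ∈ Icc 1 n, ‖(z - a i)⁻¹ - (z - b i)⁻¹‖
      ≤ ∑ i ∈ Icc 1 n, 4 / d * (H (a i) - H (b i)) := sum_le_sum fun i hi =>
        norm_inv_sub_inv_le_softSign_sub hd (hab i hi).2 (hb i hi) (ha i hi)
    _ = 4 / d * ∑ i ∈ Icc 1 n, (H (a i) - H (b i)) := (mul_sum _ _ _).symm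
    _ ≤ 4 / d * (H (a 1) - H (a (n + 1))) := by
        gcongr
        exact sum_Icc_sub_le_of_interlace hH fun i hi => (hab i hi).1
    _ ≤ 4 / d * 2 := by
        gcongr
        simp only [H]
        linarith
    _ = 8 / d := by ring

theorem interlacing_stieltjes_diff_bound_general (N : ℕ) (hN : 2 ≤ N) (a b : ℕ → ℝ)
    (hinter : ∀ i, 1 ≤ i → i ≤ N - 1 → b i < a i ∧ a (i + 1) < b i)
    (K : Set ℂ) (d R₀ : ℝ) (hd : 0 < d)
    (hdist : ∀ z ∈ K, ∀ x ∈ Set.Icc (a N) (a 1), d ≤ ‖z - (x : ℂ)‖)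
    (hR₀ : ∀ z ∈ K, ‖z‖ ≤ R₀) :
    ∀ z ∈ K,
      ‖(∑ i ∈ Finset.Icc 1 N, (z - (a i : ℂ))⁻¹) -
          ∑ i ∈ Finset.Icc 1 (N - 1), (z - (b i : ℂ))⁻¹‖ ≤ 10 * (d + R₀) / d ^ 2 := by
  intro z hz
  obtain ⟨n, rfl⟩ : ∃ n, N = n + 1 := ⟨N - 1, by omega⟩
  rw [Nat.add_sub_cancel] at hinter ⊢
  have hab : ∀ i ∈ Icc 1 n, a (i + 1) ≤ b i ∧ b i ≤ a i := fun i hi =>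
    have h := hinter i (mem_Icc.mp hi).1 (mem_Icc.mp hi).2
    ⟨h.2.le, h.1.le⟩
  have ha_anti := antitoneOn_of_interlace hab
  have ha_mem : ∀ i ∈ Icc 1 (n + 1), a i ∈ Set.Icc (a (n + 1)) (a 1) := fun i hi =>
    have hi' : i ∈ Set.Icc 1 (n + 1) := mem_Icc.mp hi
    ⟨ha_anti hi' ⟨by omega, le_rfl⟩ hi'.2, ha_anti ⟨le_rfl, by omega⟩ hi' hi'.1⟩
  have ha : ∀ i ∈ Icc 1 (n + 1), d ≤ ‖z - a i‖ := fun i hi => hdist z hz _ (ha_mem i hi)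
  have hb : ∀ i ∈ Icc 1 n, d ≤ ‖z - b i‖ := fun i hi => by
    have h₁ := ha_mem (i + 1) (by simp only [mem_Icc] at hi ⊢; omega)
    have h₂ := ha_mem i (by simp only [mem_Icc] at hi ⊢; omega)
    exact hdist z hz _ ⟨h₁.1.trans (hab i hi).1, (hab i hi).2.trans h₂.2⟩
  have hlast : ‖(z - a (n + 1))⁻¹‖ ≤ 1 / d := by
    rw [norm_inv, one_div]
    exact inv_anti₀ hd (ha _ (by simp))
  have hR₀' : 0 ≤ R₀ := (norm_nonneg z).trans (hR₀ z hz)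
  calc ‖∑ i ∈ Icc 1 (n + 1), (z - a i)⁻¹ - ∑ i ∈ Icc 1 n, (z - b i)⁻¹‖
      = ‖∑ i ∈ Icc 1 n, ((z - a i)⁻¹ - (z - b i)⁻¹) + (z - a (n + 1))⁻¹‖ := by
        rw [sum_Icc_succ_top (by omega), sum_sub_distrib, add_sub_right_comm]
    _ ≤ 8 / d + 1 / d := (norm_add_le _ _).trans <| add_le_add ((norm_sum_le _ _).trans <|
        sum_norm_inv_sub_inv_le_of_interlace hd hab (fun i hi => ha i (by
          simp only [mem_Icc] at hi ⊢; omega)) hb) hlast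
    _ ≤ 10 * (d + R₀) / d ^ 2 := by
        rw [← add_div, div_le_div_iff₀ hd (by positivity)]
        nlinarith

/-- For interlacing configurations `a_1 > b_1 > a_2 > ⋯ > b_{N-1} > a_N` and a compact
set `K ⊂ ℂ \ [a_N, a_1]` at distance `d > 0` from `[a_N, a_1]` contained in the disk of
radius `R₀`, the difference of Stieltjes-type sums is bounded by `10(d + R₀)/d²` on `K`. -/
theorem interlacing_stieltjes_diff_bound (N : ℕ) (hN : 2 ≤ N) (a b : ℕ → ℝ)
    (hinter : ∀ i, 1 ≤ i → i ≤ N - 1 → b i < a i ∧ a (i + 1) < b i)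
    (K : Set ℂ) (hK : IsCompact K) (d R₀ : ℝ) (hd : 0 < d)
    (hdist : ∀ z ∈ K, ∀ x ∈ Set.Icc (a N) (a 1), d ≤ ‖z - (x : ℂ)‖)
    (hR₀ : ∀ z ∈ K, ‖z‖ ≤ R₀) :
    ∀ z ∈ K,
      ‖(∑ i ∈ Finset.Icc 1 N, (z - (a i : ℂ))⁻¹) -
          ∑ i ∈ Finset.Icc 1 (N - 1), (z - (b i : ℂ))⁻¹‖ ≤ 10 * (d + R₀) / d ^ 2 :=
  interlacing_stieltjes_diff_bound_general N hN a b hinter K d R₀ hd hdist hR₀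
end

section
/- Let X, Y, X_1, …, X_m be bounded random variables. Then the joint cumulant satisfies Malyshev's formula in the special case: M(XY, X_1, …, X_m) = M(X, Y, X_1, …, X_m) + ∑_{J ⊆ {1,…,m}} M(X; J) · M(Y; {1,…,m} \ J), where M(X; J) denotes the joint cumulant of X together with (X_j)_{j ∈ J}, with the convention M(X; ∅) = E[X]. -/
/-!
Both sides are expanded by the moment–cumulant formula into signed sums, over set partitions of
`{X, Y, X₁, …, Xₘ}`, of products of mixed moments. Partitions of `{XY, X₁, …, Xₘ}` are the
partitions in which `X` and `Y` share a block, so the left side is the part of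
`M(X, Y, X₁, …, Xₘ)` coming from those. A product `M(X; J) · M(Y; Jᶜ)` expands over pairs of
partitions, i.e. over partitions separating `X` from `Y` together with the set of blocks lying on
the side of `X`. For a partition with `n` blocks the weights of these splittings add up to
`-(-1)^(n-1) (n-1)!`, which cancels the separating part of `M(X, Y, X₁, …, Xₘ)`.
-/

open MeasureTheory
open scoped Classical

/-- The joint cumulant of the family `(X i)_{i ∈ s}`, defined through the standard
moment–cumulant (Möbius inversion) formula
`M((X i)_{i∈s}) = ∑_{π partition of s} (-1)^{|π|-1} (|π|-1)! ∏_{B ∈ π} E[∏_{i∈B} X i]`.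
For a single variable this is the expectation. -/
noncomputable def jointCumulant {Ω : Type*} [MeasurableSpace Ω] (μ : Measure Ω)
    {ι : Type*} (s : Finset ι) (X : ι → Ω → ℝ) : ℝ :=
  ∑ π ∈ (s.powerset.powerset).filter
      (fun π : Finset (Finset ι) =>
        (∀ B ∈ π, B.Nonempty) ∧ ∀ i ∈ s, ∃! B, B ∈ π ∧ i ∈ B),
    (-1 : ℝ) ^ (π.card - 1) * ((π.card - 1).factorial : ℝ) *
      ∏ B ∈ π, ∫ ω, (∏ i ∈ B, X i ω) ∂μ

open Finset

section

variable {α β : Type*}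

noncomputable def setPartitions (s : Finset α) : Finset (Finset (Finset α)) :=
  s.powerset.powerset.filter fun π => (∀ B ∈ π, B.Nonempty) ∧ ∀ i ∈ s, ∃! B, B ∈ π ∧ i ∈ B

noncomputable def cumulantWeight (n : ℕ) : ℝ := (-1) ^ (n - 1) * (n - 1).factorial

noncomputable def cumulantOfMoments (E : Finset α → ℝ) (s : Finset α) : ℝ :=
  ∑ π ∈ setPartitions s, cumulantWeight π.card * ∏ B ∈ π, E B

noncomputable def mixedMoment {Ω : Type*} [MeasurableSpace Ω] (μ : Measure Ω)
    (X : α → Ω → ℝ) (B : Finset α) : ℝ :=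
  ∫ ω, ∏ i ∈ B, X i ω ∂μ

theorem jointCumulant_eq_cumulantOfMoments {Ω : Type*} [MeasurableSpace Ω] (μ : Measure Ω)
    (s : Finset α) (X : α → Ω → ℝ) :
    jointCumulant μ s X = cumulantOfMoments (mixedMoment μ X) s :=
  rfl

def SameBlock (π : Finset (Finset α)) (a b : α) : Prop :=
  ∃ B ∈ π, a ∈ B ∧ b ∈ B

def IsSaturated (s : Finset α) (k : α → β) (π : Finset (Finset α)) : Prop :=
  ∀ B ∈ π, ∀ x ∈ B, ∀ y ∈ s, k y = k x → y ∈ B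

section SetPartitions

variable {s t : Finset α} {π σ : Finset (Finset α)}

theorem mem_setPartitions :
    π ∈ setPartitions s ↔ (∀ B ∈ π, B ⊆ s) ∧ (∀ B ∈ π, B.Nonempty) ∧
      (∀ i ∈ s, ∃ B ∈ π, i ∈ B) ∧ ∀ B ∈ π, ∀ B' ∈ π, ∀ i ∈ B, i ∈ B' → B = B' := by
  simp only [setPartitions, mem_filter, subset_iff (s₂ := s.powerset), mem_powerset]
  constructor
  · rintro ⟨hsub, hne, huniq⟩
    exact ⟨hsub, hne, fun i hi => (huniq i hi).exists,
      fun B hB B' hB' i hi hi' => (huniq i (hsub hB hi)).unique ⟨hB, hi⟩ ⟨hB', hi'⟩⟩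
  · rintro ⟨hsub, hne, hcover, hdisj⟩
    refine ⟨hsub, hne, fun i hi => ?_⟩
    obtain ⟨B, hB, hiB⟩ := hcover i hi
    exact ⟨B, ⟨hB, hiB⟩, fun B' ⟨hB', hiB'⟩ => hdisj B' hB' B hB i hiB' hiB⟩

theorem subset_of_mem_setPartitions (hπ : π ∈ setPartitions s) {B : Finset α} (hB : B ∈ π) :
    B ⊆ s :=
  (mem_setPartitions.1 hπ).1 B hB

theorem nonempty_of_mem_setPartitions (hπ : π ∈ setPartitions s) {B : Finset α} (hB : B ∈ π) :
    B.Nonempty :=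
  (mem_setPartitions.1 hπ).2.1 B hB

theorem exists_mem_of_mem_setPartitions (hπ : π ∈ setPartitions s) {i : α} (hi : i ∈ s) :
    ∃ B ∈ π, i ∈ B :=
  (mem_setPartitions.1 hπ).2.2.1 i hi

theorem eq_of_mem_setPartitions (hπ : π ∈ setPartitions s) {B B' : Finset α} (hB : B ∈ π)
    (hB' : B' ∈ π) {i : α} (hi : i ∈ B) (hi' : i ∈ B') : B = B' :=
  (mem_setPartitions.1 hπ).2.2.2 B hB B' hB' i hi hi'

theorem disjoint_of_mem_setPartitions (hπ : π ∈ setPartitions s) (hσ : σ ∈ setPartitions t)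
    (hst : Disjoint s t) : Disjoint π σ := by
  refine disjoint_left.2 fun B hBπ hBσ => ?_
  obtain ⟨i, hi⟩ := nonempty_of_mem_setPartitions hπ hBπ
  exact disjoint_left.1 hst (subset_of_mem_setPartitions hπ hBπ hi)
    (subset_of_mem_setPartitions hσ hBσ hi)

variable [DecidableEq α]

theorem sup_id_of_mem_setPartitions (hπ : π ∈ setPartitions s) : π.sup id = s := by
  ext i
  rw [mem_sup]
  exact ⟨fun ⟨B, hB, hi⟩ => subset_of_mem_setPartitions hπ hB hi,
    exists_mem_of_mem_setPartitions hπ⟩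

theorem mem_sup_id_iff_of_mem_setPartitions (hπ : π ∈ setPartitions s) (hσ : σ ⊆ π)
    {B : Finset α} (hB : B ∈ π) {i : α} (hi : i ∈ B) : i ∈ σ.sup id ↔ B ∈ σ := by
  rw [mem_sup]
  refine ⟨fun ⟨B', hB', hiB'⟩ => ?_, fun hBσ => ⟨B, hBσ, hi⟩⟩
  rwa [eq_of_mem_setPartitions hπ hB (hσ hB') hi hiB']

theorem mem_setPartitions_sup_id (hπ : π ∈ setPartitions s) (hσ : σ ⊆ π) :
    σ ∈ setPartitions (σ.sup id) := by
  refine mem_setPartitions.2 ⟨fun B hB => le_sup (f := id) hB,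
    fun B hB => nonempty_of_mem_setPartitions hπ (hσ hB), fun i hi => mem_sup.1 hi,
    fun B hB B' hB' i hi hi' => eq_of_mem_setPartitions hπ (hσ hB) (hσ hB') hi hi'⟩

theorem sup_id_sdiff_of_mem_setPartitions (hπ : π ∈ setPartitions s) (hσ : σ ⊆ π) :
    (π \ σ).sup id = s \ σ.sup id := by
  ext i
  rw [mem_sdiff, mem_sup]
  constructor
  · rintro ⟨B, hB, hi⟩
    rw [mem_sdiff] at hB
    exact ⟨subset_of_mem_setPartitions hπ hB.1 hi,
      (mem_sup_id_iff_of_mem_setPartitions hπ hσ hB.1 hi).not.2 hB.2⟩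
  · rintro ⟨hi, hiσ⟩
    obtain ⟨B, hB, hiB⟩ := exists_mem_of_mem_setPartitions hπ hi
    exact ⟨B, mem_sdiff.2 ⟨hB, (mem_sup_id_iff_of_mem_setPartitions hπ hσ hB hiB).not.1 hiσ⟩, hiB⟩

theorem sdiff_mem_setPartitions (hπ : π ∈ setPartitions s) (hσ : σ ⊆ π) :
    π \ σ ∈ setPartitions (s \ σ.sup id) := by
  rw [← sup_id_sdiff_of_mem_setPartitions hπ hσ]
  exact mem_setPartitions_sup_id hπ sdiff_subset

theorem union_mem_setPartitions (hπ : π ∈ setPartitions s) (hσ : σ ∈ setPartitions t)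
    (hst : Disjoint s t) : π ∪ σ ∈ setPartitions (s ∪ t) := by
  have hsub : ∀ B ∈ π ∪ σ, B ⊆ s ∪ t := by
    intro B hB
    rcases mem_union.1 hB with hB | hB
    · exact (subset_of_mem_setPartitions hπ hB).trans subset_union_left
    · exact (subset_of_mem_setPartitions hσ hB).trans subset_union_right
  refine mem_setPartitions.2 ⟨hsub, fun B hB => ?_, fun i hi => ?_, fun B hB B' hB' i hi hi' => ?_⟩
  · rcases mem_union.1 hB with hB | hB
    · exact nonempty_of_mem_setPartitions hπ hB
    · exact nonempty_of_mem_setPartitions hσ hB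
  · rcases mem_union.1 hi with hi | hi
    · obtain ⟨B, hB, hiB⟩ := exists_mem_of_mem_setPartitions hπ hi
      exact ⟨B, mem_union_left _ hB, hiB⟩
    · obtain ⟨B, hB, hiB⟩ := exists_mem_of_mem_setPartitions hσ hi
      exact ⟨B, mem_union_right _ hB, hiB⟩
  · rcases mem_union.1 hB with hB | hB <;> rcases mem_union.1 hB' with hB' | hB'
    · exact eq_of_mem_setPartitions hπ hB hB' hi hi'
    · exact absurd (subset_of_mem_setPartitions hσ hB' hi')
        (disjoint_left.1 hst (subset_of_mem_setPartitions hπ hB hi))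
    · exact absurd (subset_of_mem_setPartitions hσ hB hi)
        (disjoint_left.1 hst (subset_of_mem_setPartitions hπ hB' hi'))
    · exact eq_of_mem_setPartitions hσ hB hB' hi hi'

end SetPartitions

open Nat in
theorem sum_powerset_factorial_mul_factorial (G : Finset α) :
    ∑ U ∈ G.powerset, U.card ! * (G.card - U.card)! = (G.card + 1)! := by
  rw [sum_powerset_apply_card (fun k => k ! * (G.card - k)!)]
  have hterm : ∀ k ∈ range (G.card + 1), G.card.choose k • (k ! * (G.card - k)!) = G.card ! :=
    fun k hk => by
      rw [smul_eq_mul, ← mul_assoc, choose_mul_factorial_mul_factorial (mem_range_succ_iff.1 hk)]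
  rw [sum_congr rfl hterm, sum_const, card_range, smul_eq_mul, factorial_succ]

open Nat in
theorem sum_cumulantWeight_mul_cumulantWeight [DecidableEq α] {F : Finset α} {x y : α}
    (hx : x ∈ F) (hy : y ∈ F) (hxy : x ≠ y) :
    ∑ T ∈ F.powerset.filter (fun T => x ∈ T ∧ y ∉ T),
        cumulantWeight T.card * cumulantWeight (F.card - T.card) = -cumulantWeight F.card := by
  set G := (F.erase x).erase y
  have hxG : x ∉ G := fun h => (mem_erase.1 (mem_of_mem_erase h)).1 rfl
  have hcard : F.card = G.card + 2 := by
    have h1 : G.card + 1 = (F.erase x).card := card_erase_add_one (mem_erase.2 ⟨hxy.symm, hy⟩)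
    have h2 := card_erase_add_one hx
    omega
  have hsplits : F.powerset.filter (fun T => x ∈ T ∧ y ∉ T) = G.powerset.image (insert x) := by
    ext T
    simp only [mem_filter, mem_powerset, mem_image, G, subset_erase]
    constructor
    · rintro ⟨hTF, hxT, hyT⟩
      exact ⟨T.erase x, ⟨⟨(erase_subset x T).trans hTF, notMem_erase x T⟩,
        fun h => hyT (mem_of_mem_erase h)⟩, insert_erase hxT⟩
    · rintro ⟨U, ⟨⟨hUF, hxU⟩, hyU⟩, rfl⟩
      exact ⟨insert_subset hx hUF, mem_insert_self x U,
        fun h => hyU ((mem_insert.1 h).resolve_left hxy.symm)⟩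
  have hterm : ∀ U ∈ G.powerset, cumulantWeight (insert x U).card *
      cumulantWeight (F.card - (insert x U).card) =
        (-1) ^ G.card * ((U.card ! * (G.card - U.card)! : ℕ) : ℝ) := by
    intro U hU
    have hUG : U.card ≤ G.card := card_le_card (mem_powerset.1 hU)
    have hsign : (-1 : ℝ) ^ G.card = (-1) ^ U.card * (-1) ^ (G.card - U.card) := by
      rw [← pow_add, Nat.add_sub_cancel' hUG]
    rw [card_insert_of_notMem (fun h => hxG (mem_powerset.1 hU h)), hcard,
      show G.card + 2 - (U.card + 1) = G.card - U.card + 1 by omega, hsign]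
    simp only [cumulantWeight, Nat.add_sub_cancel]
    push_cast
    ring
  rw [hsplits, sum_image fun U hU U' hU' h => by
      rw [← erase_insert (fun h => hxG (mem_powerset.1 hU h)), h,
        erase_insert (fun h => hxG (mem_powerset.1 hU' h))],
    sum_congr rfl hterm, ← mul_sum, ← Nat.cast_sum, sum_powerset_factorial_mul_factorial, hcard,
    cumulantWeight, show G.card + 2 - 1 = G.card + 1 from rfl, pow_succ]
  ring

section Splitting

variable [DecidableEq α] {s : Finset α} {a b : α}

/-- A pair of partitions of `S` and `s \ S` is the same thing as a partition `π` of `s`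
together with the sub-collection of its blocks that covers `S`. -/
theorem sum_sigma_setPartitions_sdiff (f : Finset (Finset α) → Finset (Finset α) → ℝ) :
    ∑ p ∈ (s.powerset.filter fun S => a ∈ S ∧ b ∉ S).sigma
        (fun S => setPartitions S ×ˢ setPartitions (s \ S)), f p.2.1 p.2.2 =
      ∑ q ∈ ((setPartitions s).filter fun π => ¬SameBlock π a b).sigma
        (fun π => π.powerset.filter fun σ => a ∈ σ.sup id ∧ b ∉ σ.sup id), f q.2 (q.1 \ q.2) := by
  refine sum_nbij' (fun p => ⟨p.2.1 ∪ p.2.2, p.2.1⟩) (fun q => ⟨q.2.sup id, q.2, q.1 \ q.2⟩)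
    ?_ ?_ ?_ ?_ ?_
  · rintro ⟨S, π₁, π₂⟩ hp
    simp only [mem_sigma, mem_filter, mem_powerset, mem_product] at hp ⊢
    obtain ⟨⟨hSs, haS, hbS⟩, h₁, h₂⟩ := hp
    refine ⟨⟨?_, ?_⟩, subset_union_left, ?_⟩
    · simpa [union_sdiff_of_subset hSs] using union_mem_setPartitions h₁ h₂ disjoint_sdiff
    · rintro ⟨B, hB, haB, hbB⟩
      rcases mem_union.1 hB with hB | hB
      · exact hbS (subset_of_mem_setPartitions h₁ hB hbB)
      · exact (mem_sdiff.1 (subset_of_mem_setPartitions h₂ hB haB)).2 haS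
    · rw [sup_id_of_mem_setPartitions h₁]
      exact ⟨haS, hbS⟩
  · rintro ⟨π, σ⟩ hq
    simp only [mem_sigma, mem_filter, mem_powerset, mem_product] at hq ⊢
    obtain ⟨⟨hπ, -⟩, hσπ, haσ, hbσ⟩ := hq
    exact ⟨⟨Finset.sup_le fun B hB => subset_of_mem_setPartitions hπ (hσπ hB), haσ, hbσ⟩,
      mem_setPartitions_sup_id hπ hσπ, sdiff_mem_setPartitions hπ hσπ⟩
  · rintro ⟨S, π₁, π₂⟩ hp
    simp only [mem_sigma, mem_filter, mem_powerset, mem_product] at hp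
    obtain ⟨-, h₁, h₂⟩ := hp
    simp only [sup_id_of_mem_setPartitions h₁,
      union_sdiff_cancel_left (disjoint_of_mem_setPartitions h₁ h₂ disjoint_sdiff)]
  · rintro ⟨π, σ⟩ hq
    simp only [mem_sigma, mem_filter, mem_powerset] at hq
    simp only [union_sdiff_of_subset hq.2.1]
  · rintro ⟨S, π₁, π₂⟩ hp
    simp only [mem_sigma, mem_filter, mem_powerset, mem_product] at hp
    obtain ⟨-, h₁, h₂⟩ := hp
    simp only [union_sdiff_cancel_left (disjoint_of_mem_setPartitions h₁ h₂ disjoint_sdiff)]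

theorem sum_cumulantWeight_mul_of_not_sameBlock {π : Finset (Finset α)} (hπ : π ∈ setPartitions s)
    (ha : a ∈ s) (hb : b ∈ s) (hab : ¬SameBlock π a b) :
    ∑ σ ∈ π.powerset.filter (fun σ => a ∈ σ.sup id ∧ b ∉ σ.sup id),
        cumulantWeight σ.card * cumulantWeight (π.card - σ.card) = -cumulantWeight π.card := by
  obtain ⟨A, hA, haA⟩ := exists_mem_of_mem_setPartitions hπ ha
  obtain ⟨B, hB, hbB⟩ := exists_mem_of_mem_setPartitions hπ hb
  have hAB : A ≠ B := fun h => hab ⟨A, hA, haA, h ▸ hbB⟩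
  rw [← sum_cumulantWeight_mul_cumulantWeight hA hB hAB]
  refine sum_congr (filter_congr fun σ hσ => ?_) fun _ _ => rfl
  rw [mem_powerset] at hσ
  rw [mem_sup_id_iff_of_mem_setPartitions hπ hσ hA haA,
    mem_sup_id_iff_of_mem_setPartitions hπ hσ hB hbB]

theorem sum_cumulantOfMoments_mul_sdiff (E : Finset α → ℝ) (ha : a ∈ s) (hb : b ∈ s) :
    ∑ S ∈ s.powerset.filter (fun S => a ∈ S ∧ b ∉ S),
        cumulantOfMoments E S * cumulantOfMoments E (s \ S) =
      -∑ π ∈ (setPartitions s).filter (fun π => ¬SameBlock π a b),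
        cumulantWeight π.card * ∏ B ∈ π, E B := by
  set term := fun π : Finset (Finset α) => cumulantWeight π.card * ∏ B ∈ π, E B
  calc _ = ∑ p ∈ (s.powerset.filter fun S => a ∈ S ∧ b ∉ S).sigma
          (fun S => setPartitions S ×ˢ setPartitions (s \ S)), term p.2.1 * term p.2.2 := by
        rw [sum_sigma]
        exact sum_congr rfl fun S _ => by
          rw [cumulantOfMoments, cumulantOfMoments, sum_mul_sum, sum_product]
    _ = ∑ π ∈ (setPartitions s).filter (fun π => ¬SameBlock π a b),
          ∑ σ ∈ π.powerset.filter (fun σ => a ∈ σ.sup id ∧ b ∉ σ.sup id),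
            term σ * term (π \ σ) := by
        exact (sum_sigma_setPartitions_sdiff fun σ τ => term σ * term τ).trans (sum_sigma _ _ _)
    _ = ∑ π ∈ (setPartitions s).filter (fun π => ¬SameBlock π a b), -term π := by
        refine sum_congr rfl fun π hπ => ?_
        rw [mem_filter] at hπ
        have hsplit : ∀ σ ∈ π.powerset.filter (fun σ => a ∈ σ.sup id ∧ b ∉ σ.sup id),
            term σ * term (π \ σ) =
              cumulantWeight σ.card * cumulantWeight (π.card - σ.card) * ∏ B ∈ π, E B := by
          intro σ hσ
          have hσπ : σ ⊆ π := mem_powerset.1 (mem_filter.1 hσ).1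
          simp only [term]
          rw [card_sdiff_of_subset hσπ, ← prod_sdiff hσπ]
          ring
        rw [sum_congr rfl hsplit, ← sum_mul,
          sum_cumulantWeight_mul_of_not_sameBlock hπ.1 ha hb hπ.2, neg_mul]
    _ = _ := sum_neg_distrib _

end Splitting

theorem cumulantOfMoments_congr {E E' : Finset α → ℝ} {s : Finset α}
    (h : ∀ B ⊆ s, E B = E' B) : cumulantOfMoments E s = cumulantOfMoments E' s :=
  sum_congr rfl fun _ hπ =>
    congrArg _ (prod_congr rfl fun _ hB => h _ (subset_of_mem_setPartitions hπ hB))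

section Comap

variable [DecidableEq β] {s : Finset α} {k : α → β}

theorem image_filter_comp_mem {C : Finset β} (hC : C ⊆ s.image k) :
    (s.filter fun x => k x ∈ C).image k = C := by
  rw [← filter_image (p := (· ∈ C)), filter_mem_eq_inter, inter_eq_right.2 hC]

theorem filter_comp_mem_image_of_isSaturated {π : Finset (Finset α)} (hπ : π ∈ setPartitions s)
    (hsat : IsSaturated s k π) {B : Finset α} (hB : B ∈ π) :
    s.filter (fun x => k x ∈ B.image k) = B := by
  ext y
  simp only [mem_filter, mem_image]
  exact ⟨fun ⟨hy, x, hx, hxy⟩ => hsat B hB x hx y hy hxy.symm,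
    fun hy => ⟨subset_of_mem_setPartitions hπ hB hy, y, hy, rfl⟩⟩

theorem comap_mem_setPartitions {σ : Finset (Finset β)} (hσ : σ ∈ setPartitions (s.image k)) :
    σ.image (fun C => s.filter fun x => k x ∈ C) ∈ (setPartitions s).filter (IsSaturated s k) := by
  rw [mem_filter, mem_setPartitions]
  refine ⟨⟨forall_mem_image.2 fun C _ => filter_subset _ _, forall_mem_image.2 fun C hC => ?_,
    fun x hx => ?_, forall_mem_image.2 fun C hC => forall_mem_image.2 fun C' hC' x hx hx' => ?_⟩,
    forall_mem_image.2 fun C _ x hx y hy hxy => mem_filter.2 ⟨hy, hxy ▸ (mem_filter.1 hx).2⟩⟩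
  · obtain ⟨c, hc⟩ := nonempty_of_mem_setPartitions hσ hC
    obtain ⟨x, hx, rfl⟩ := mem_image.1 (subset_of_mem_setPartitions hσ hC hc)
    exact ⟨x, mem_filter.2 ⟨hx, hc⟩⟩
  · obtain ⟨C, hC, hxC⟩ := exists_mem_of_mem_setPartitions hσ (mem_image_of_mem k hx)
    exact ⟨_, mem_image_of_mem _ hC, mem_filter.2 ⟨hx, hxC⟩⟩
  · rw [eq_of_mem_setPartitions hσ hC hC' (mem_filter.1 hx).2 (mem_filter.1 hx').2]

theorem image_image_mem_setPartitions {π : Finset (Finset α)} (hπ : π ∈ setPartitions s)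
    (hsat : IsSaturated s k π) : π.image (image k) ∈ setPartitions (s.image k) := by
  rw [mem_setPartitions]
  refine ⟨forall_mem_image.2 fun B hB => image_subset_image (subset_of_mem_setPartitions hπ hB),
    forall_mem_image.2 fun B hB => (nonempty_of_mem_setPartitions hπ hB).image k,
    fun c hc => ?_, forall_mem_image.2 fun B hB => forall_mem_image.2 fun B' hB' c hc hc' => ?_⟩
  · obtain ⟨x, hx, rfl⟩ := mem_image.1 hc
    obtain ⟨B, hB, hxB⟩ := exists_mem_of_mem_setPartitions hπ hx
    exact ⟨_, mem_image_of_mem _ hB, mem_image_of_mem k hxB⟩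
  · obtain ⟨x, hx, rfl⟩ := mem_image.1 hc
    obtain ⟨x', hx', hxx'⟩ := mem_image.1 hc'
    rw [eq_of_mem_setPartitions hπ hB hB' hx
      (hsat B' hB' x' hx' x (subset_of_mem_setPartitions hπ hB hx) hxx'.symm)]

theorem image_comap_setPartitions (k : α → β) (s : Finset α) :
    (setPartitions (s.image k)).image (fun σ => σ.image fun C => s.filter fun x => k x ∈ C) =
      (setPartitions s).filter (IsSaturated s k) := by
  refine Subset.antisymm (fun π hπ => ?_) (fun π hπ => ?_)
  · obtain ⟨σ, hσ, rfl⟩ := mem_image.1 hπ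
    exact comap_mem_setPartitions hσ
  · obtain ⟨hπ, hsat⟩ := mem_filter.1 hπ
    refine mem_image.2 ⟨_, image_image_mem_setPartitions hπ hsat, ?_⟩
    rw [image_image]
    exact (image_congr fun B hB => filter_comp_mem_image_of_isSaturated hπ hsat hB).trans image_id

theorem cumulantOfMoments_image_comap (E : Finset α → ℝ) (k : α → β) (s : Finset α) :
    cumulantOfMoments (fun C => E (s.filter fun x => k x ∈ C)) (s.image k) =
      ∑ π ∈ (setPartitions s).filter (IsSaturated s k), cumulantWeight π.card * ∏ B ∈ π, E B := by
  have hinj : ∀ σ ∈ setPartitions (s.image k),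
      Set.InjOn (fun C => s.filter fun x => k x ∈ C) (σ : Set (Finset β)) :=
    fun σ hσ C hC C' hC' h => by
      rw [← image_filter_comp_mem (subset_of_mem_setPartitions hσ hC),
        ← image_filter_comp_mem (subset_of_mem_setPartitions hσ hC')]
      exact congrArg (image k) h
  have hleft : ∀ σ ∈ setPartitions (s.image k),
      (σ.image fun C => s.filter fun x => k x ∈ C).image (image k) = σ := fun σ hσ => by
    rw [image_image]
    exact (image_congr fun C hC =>
      image_filter_comp_mem (subset_of_mem_setPartitions hσ hC)).trans image_id
  rw [← image_comap_setPartitions,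
    sum_image fun σ hσ σ' hσ' h => by rw [← hleft σ hσ, h, hleft σ' hσ']]
  exact sum_congr rfl fun σ hσ => by
    rw [card_image_of_injOn (hinj σ hσ), prod_image (hinj σ hσ)]

theorem cumulantOfMoments_image (E : Finset β → ℝ) (hk : Set.InjOn k s) :
    cumulantOfMoments E (s.image k) = cumulantOfMoments (fun B => E (B.image k)) s := by
  have hsat : ∀ π ∈ setPartitions s, IsSaturated s k π := fun π hπ B hB x hx y hy hxy =>
    hk hy (subset_of_mem_setPartitions hπ hB hx) hxy ▸ hx
  calc cumulantOfMoments E (s.image k)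
      = cumulantOfMoments (fun C => E ((s.filter fun x => k x ∈ C).image k)) (s.image k) :=
        cumulantOfMoments_congr fun C hC => by rw [image_filter_comp_mem hC]
    _ = _ := by
        rw [cumulantOfMoments_image_comap (fun B => E (B.image k)), filter_true_of_mem hsat]
        rfl

theorem jointCumulant_image {Ω : Type*} [MeasurableSpace Ω] (μ : Measure Ω) (Z : β → Ω → ℝ)
    (hk : Set.InjOn k s) : jointCumulant μ (s.image k) Z = jointCumulant μ s fun i => Z (k i) := by
  rw [jointCumulant_eq_cumulantOfMoments, jointCumulant_eq_cumulantOfMoments,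
    cumulantOfMoments_image _ hk]
  exact cumulantOfMoments_congr fun B hB => by
    simp only [mixedMoment, prod_image (hk.mono (coe_subset.2 hB))]

end Comap

section CollapseBool

variable {Ω : Type*} [MeasurableSpace Ω]

def collapseBool : Bool ⊕ β → Option β :=
  Sum.elim (fun _ => none) some

theorem isSaturated_collapseBool_iff [Fintype β] {π : Finset (Finset (Bool ⊕ β))}
    (hπ : π ∈ setPartitions univ) :
    IsSaturated univ collapseBool π ↔ SameBlock π (Sum.inl true) (Sum.inl false) := by
  constructor
  · intro hsat
    obtain ⟨B, hB, htB⟩ := exists_mem_of_mem_setPartitions hπ (mem_univ (Sum.inl true))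
    exact ⟨B, hB, htB, hsat B hB _ htB _ (mem_univ _) rfl⟩
  · rintro ⟨B₀, hB₀, ht, hf⟩ B hB x hx y - hxy
    rcases x with c | j <;> rcases y with d | j' <;>
      simp only [collapseBool, Sum.elim_inl, Sum.elim_inr, reduceCtorEq, Option.some.injEq] at hxy
    · have hc : Sum.inl c ∈ B₀ := by cases c <;> assumption
      rw [eq_of_mem_setPartitions hπ hB hB₀ hx hc]
      cases d <;> assumption
    · rwa [hxy]

variable [DecidableEq β]

theorem jointCumulant_insert_none {γ : Type*} [DecidableEq γ] (μ : Measure Ω)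
    (Z : γ ⊕ β → Ω → ℝ) (c : γ) (J : Finset β) :
    jointCumulant μ (insert none (J.image some))
        (fun o => Option.elim o (Z (Sum.inl c)) fun j => Z (Sum.inr j)) =
      jointCumulant μ (insert (Sum.inl c) (J.image Sum.inr)) Z := by
  have hinj : Function.Injective fun o : Option β => Option.elim o (Sum.inl c) Sum.inr := by
    rintro (_ | i) (_ | j) h <;> simp_all
  have himage : (insert none (J.image some)).image (fun o => Option.elim o (Sum.inl c) Sum.inr) =
      insert (Sum.inl c) (J.image Sum.inr) := by
    rw [image_insert, image_image]
    rfl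
  rw [← himage, jointCumulant_image _ _ hinj.injOn]
  congr 1
  funext o
  cases o <;> rfl

variable [Fintype β]

theorem jointCumulant_univ_option_mul (μ : Measure Ω) (Z : Bool ⊕ β → Ω → ℝ) :
    jointCumulant μ univ
        (fun o => Option.elim o (fun ω => Z (Sum.inl true) ω * Z (Sum.inl false) ω)
          fun j => Z (Sum.inr j)) =
      ∑ π ∈ (setPartitions univ).filter (fun π => SameBlock π (Sum.inl true) (Sum.inl false)),
        cumulantWeight π.card * ∏ B ∈ π, mixedMoment μ Z B := by
  have hmoment : ∀ C : Finset (Option β),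
      mixedMoment μ (fun o => Option.elim o (fun ω => Z (Sum.inl true) ω * Z (Sum.inl false) ω)
          fun j => Z (Sum.inr j)) C =
        mixedMoment μ Z (univ.filter fun x => collapseBool x ∈ C) := by
    intro C
    refine congrArg (integral μ) (funext fun ω => ?_)
    rw [← univ_inter C, ← prod_ite_mem, prod_filter, Fintype.prod_option, Fintype.prod_sum_type]
    simp [collapseBool]
  have hsurj : Function.Surjective (collapseBool : Bool ⊕ β → Option β) := by
    rintro (_ | j)
    exacts [⟨Sum.inl true, rfl⟩, ⟨Sum.inr j, rfl⟩]
  rw [jointCumulant_eq_cumulantOfMoments, funext hmoment, ← image_univ_of_surjective hsurj,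
    cumulantOfMoments_image_comap]
  exact sum_congr (filter_congr fun π hπ => isSaturated_collapseBool_iff hπ) fun _ _ => rfl

theorem sum_jointCumulant_insert_none_mul (μ : Measure Ω) (Z : Bool ⊕ β → Ω → ℝ) :
    ∑ J : Finset β,
        jointCumulant μ (insert none (J.image some))
            (fun o => Option.elim o (Z (Sum.inl true)) fun j => Z (Sum.inr j)) *
          jointCumulant μ (insert none (Jᶜ.image some))
            (fun o => Option.elim o (Z (Sum.inl false)) fun j => Z (Sum.inr j)) =
      ∑ S ∈ univ.powerset.filter (fun S => Sum.inl true ∈ S ∧ Sum.inl false ∉ S),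
        jointCumulant μ S Z * jointCumulant μ (univ \ S) Z := by
  simp only [jointCumulant_insert_none]
  refine sum_nbij' (fun J => insert (Sum.inl true) (J.image Sum.inr))
    (fun S => univ.filter fun j => Sum.inr j ∈ S) ?_ ?_ ?_ ?_ ?_
  · intro J _
    simp
  · intro S _
    exact mem_univ _
  · intro J _
    ext j
    simp
  · intro S hS
    simp only [mem_filter, mem_powerset] at hS
    ext (b | j)
    · cases b <;> simp [hS.2.1, hS.2.2]
    · simp
  · intro J _
    congr 2
    ext (b | j)
    · cases b <;> simp
    · simp

end CollapseBool

end

theorem malyshev_formula_general {Ω : Type*} [MeasurableSpace Ω] (μ : Measure Ω)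
    (m : ℕ) (X Y : Ω → ℝ) (Xs : Fin m → Ω → ℝ) :
    jointCumulant μ (Finset.univ : Finset (Option (Fin m)))
        (fun o => Option.elim o (fun ω => X ω * Y ω) Xs) =
      jointCumulant μ (Finset.univ : Finset (Bool ⊕ Fin m))
          (Sum.elim (fun b => if b then X else Y) Xs) +
        ∑ J : Finset (Fin m),
          jointCumulant μ (insert none (J.image some)) (fun o => Option.elim o X Xs) *
            jointCumulant μ (insert none (Jᶜ.image some)) (fun o => Option.elim o Y Xs) := by
  set Z : Bool ⊕ Fin m → Ω → ℝ := Sum.elim (fun b => if b then X else Y) Xs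
  have hmerged : jointCumulant μ univ (fun o => Option.elim o (fun ω => X ω * Y ω) Xs) = _ :=
    jointCumulant_univ_option_mul μ Z
  have hsplit : ∑ J : Finset (Fin m),
      jointCumulant μ (insert none (J.image some)) (fun o => Option.elim o X Xs) *
        jointCumulant μ (insert none (Jᶜ.image some)) (fun o => Option.elim o Y Xs) = _ :=
    sum_jointCumulant_insert_none_mul μ Z
  rw [hmerged, hsplit]
  simp only [jointCumulant_eq_cumulantOfMoments]
  rw [sum_cumulantOfMoments_mul_sdiff _ (mem_univ _) (mem_univ _), cumulantOfMoments,
    ← sum_filter_add_sum_filter_not (setPartitions univ)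
      fun π => SameBlock π (Sum.inl true) (Sum.inl false)]
  ring

/-- Malyshev's formula (special case): for bounded random variables `X, Y, X_1, …, X_m`,
`M(XY, X_1, …, X_m) = M(X, Y, X_1, …, X_m) + ∑_{J ⊆ {1,…,m}} M(X; J)·M(Y; {1,…,m}\J)`,
where `M(X; J)` is the joint cumulant of `X` together with `(X_j)_{j ∈ J}`
(with `M(X; ∅) = E[X]`). -/
theorem malyshev_formula {Ω : Type*} [MeasurableSpace Ω] (μ : Measure Ω)
    [IsProbabilityMeasure μ] (m : ℕ) (X Y : Ω → ℝ) (Xs : Fin m → Ω → ℝ)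
    (hX : Measurable X) (hY : Measurable Y) (hXs : ∀ j, Measurable (Xs j))
    (hXb : ∃ C, ∀ ω, |X ω| ≤ C) (hYb : ∃ C, ∀ ω, |Y ω| ≤ C)
    (hXsb : ∀ j, ∃ C, ∀ ω, |Xs j ω| ≤ C) :
    jointCumulant μ (Finset.univ : Finset (Option (Fin m)))
        (fun o => Option.elim o (fun ω => X ω * Y ω) Xs) =
      jointCumulant μ (Finset.univ : Finset (Bool ⊕ Fin m))
          (Sum.elim (fun b => if b then X else Y) Xs) +
        ∑ J : Finset (Fin m),
          jointCumulant μ (insert none (J.image some)) (fun o => Option.elim o X Xs) *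
            jointCumulant μ (insert none (Jᶜ.image some)) (fun o => Option.elim o Y Xs) :=
  malyshev_formula_general μ m X Y Xs
end

section
/- For all y ∈ [0,1] and θ ∈ [0,1], one has θ·sin(θy)/y + 2·cos(θy) − 2·cosh(θ√(1−y²)) ≤ 0 (interpreting sin(θy)/y as θ when y = 0). Equivalently, θ·sin(θy) ≤ y·(2cosh(θ√(1−y²)) − 2cos(θy)) for y ∈ (0,1]. -/
/-! Put `x = θy ≤ 1`. Truncating the Taylor series, `cosh(θ√(1-y²)) ≥ 1 + θ²(1-y²)/2` and
`cos x ≤ 1 - x²/2 + 5x⁴/96`, so the `y²`-terms cancel and `2cosh(θ√(1-y²)) - 2cos x` is at least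
`θ² - (5/48)x⁴`. On the other side `θ sin x ≤ θ(x - x³/6 + x⁵/100)`; after multiplying the first
bound by `y`, the difference of the two polynomial bounds is
`θ⁴y³(1/6 - x²/100 - 5y²/48) ≥ 0`. -/

open Real

lemma Real.one_add_sq_div_two_le_cosh (t : ℝ) : 1 + t ^ 2 / 2 ≤ cosh t := by
  have h := sum_le_hasSum (Finset.range 2)
    (fun n _ => div_nonneg ((even_two_mul n).pow_nonneg t) (Nat.cast_nonneg _)) (hasSum_cosh t)
  norm_num [Finset.sum_range_succ] at h
  linarith

lemma Real.sin_le_sub_cube_add_pow_five_of_le_one {x : ℝ} (hx₀ : 0 ≤ x) (hx₁ : x ≤ 1) :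
    sin x ≤ x - x ^ 3 / 6 + x ^ 5 / 100 := by
  have h := (abs_le.mp (sin_bound (abs_le.mpr ⟨by linarith, hx₁⟩))).2
  rw [abs_of_nonneg hx₀] at h
  linarith

lemma sq_sub_le_two_cosh_sub_two_cos {y θ : ℝ} (hy : y ^ 2 ≤ 1) (hθy : |θ * y| ≤ 1) :
    θ ^ 2 - 5 / 48 * (θ * y) ^ 4 ≤
      2 * cosh (θ * sqrt (1 - y ^ 2)) - 2 * cos (θ * y) := by
  have hcosh := one_add_sq_div_two_le_cosh (θ * sqrt (1 - y ^ 2))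
  rw [mul_pow, sq_sqrt (by linarith)] at hcosh
  have hcos := (abs_le.mp (cos_bound hθy)).2
  rw [pow_abs, abs_of_nonneg (by positivity)] at hcos
  linarith

lemma mul_sin_le_mul_two_cosh_sub_two_cos {y θ : ℝ} (hy : y ∈ Set.Icc (0 : ℝ) 1)
    (hθ : θ ∈ Set.Icc (0 : ℝ) 1) :
    θ * sin (θ * y) ≤ y * (2 * cosh (θ * sqrt (1 - y ^ 2)) - 2 * cos (θ * y)) := by
  obtain ⟨hy₀, hy₁⟩ := hy
  obtain ⟨hθ₀, hθ₁⟩ := hθ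
  have hx₀ : 0 ≤ θ * y := mul_nonneg hθ₀ hy₀
  have hx₁ : θ * y ≤ 1 := mul_le_one₀ hθ₁ hy₀ hy₁
  have hy2 : y ^ 2 ≤ 1 := pow_le_one₀ hy₀ hy₁
  calc θ * sin (θ * y)
      ≤ θ * (θ * y - (θ * y) ^ 3 / 6 + (θ * y) ^ 5 / 100) :=
        mul_le_mul_of_nonneg_left (sin_le_sub_cube_add_pow_five_of_le_one hx₀ hx₁) hθ₀
    _ ≤ y * (θ ^ 2 - 5 / 48 * (θ * y) ^ 4) := by
        have hx2 : (θ * y) ^ 2 ≤ 1 := pow_le_one₀ hx₀ hx₁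
        have h : 0 ≤ θ ^ 4 * y ^ 3 * (1 / 6 - (θ * y) ^ 2 / 100 - 5 / 48 * y ^ 2) :=
          mul_nonneg (by positivity) (by linarith)
        linarith
    _ ≤ y * (2 * cosh (θ * sqrt (1 - y ^ 2)) - 2 * cos (θ * y)) :=
        mul_le_mul_of_nonneg_left
          (sq_sub_le_two_cosh_sub_two_cos hy2 (abs_le.mpr ⟨by linarith, hx₁⟩)) hy₀

/-- For all `y ∈ [0,1]` and `θ ∈ [0,1]`,
`θ·sin(θy)/y + 2cos(θy) − 2cosh(θ√(1−y²)) ≤ 0` (interpreting `sin(θy)/y` as `θ` when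
`y = 0`).  Equivalently, `θ·sin(θy) ≤ y·(2cosh(θ√(1−y²)) − 2cos(θy))` for `y ∈ (0,1]`. -/
theorem density_comparison_ineq (y θ : ℝ) (hy : y ∈ Set.Icc (0 : ℝ) 1)
    (hθ : θ ∈ Set.Icc (0 : ℝ) 1) :
    θ * (if y = 0 then θ else Real.sin (θ * y) / y) + 2 * Real.cos (θ * y) -
        2 * Real.cosh (θ * Real.sqrt (1 - y ^ 2)) ≤ 0 ∧
      (0 < y →
        θ * Real.sin (θ * y) ≤
          y * (2 * Real.cosh (θ * Real.sqrt (1 - y ^ 2)) - 2 * Real.cos (θ * y))) := by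
  have hkey := mul_sin_le_mul_two_cosh_sub_two_cos hy hθ
  refine ⟨?_, fun _ => hkey⟩
  rcases hy.1.eq_or_lt with rfl | hy₀
  · have h := sq_sub_le_two_cosh_sub_two_cos (θ := θ) (y := 0) (by norm_num) (by simp)
    norm_num at h ⊢
    linarith
  · have hdiv := (div_le_iff₀' hy₀).mpr hkey
    rw [mul_div_assoc] at hdiv
    rw [if_neg hy₀.ne']
    linarith
end
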